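/- arXiv:2604.26741 — 6 statements merged into one kernel-verified Lean document; each statement's English description precedes it below -/
import Mathlib

section
/- If Pmax·∑_k b_k ≥ η, then the minimum of problem (P1) is attained: there exists a feasible point (p*, α*) with α* > 0 such that f(p*, α*) ≤ f(p, α) for every feasible (p, α). -/
open Finset

/-- Objective of problem (P1). -/
noncomputable def objP1 (K : ℕ) (h : Fin K → ℝ) (σ2 : ℝ)
    (p : Fin K → ℝ) (α : ℝ) : ℝ :=
  α * (σ2 + ∑ k, (h k) ^ 2 * p k) - 2 * ∑ k, h k * Real.sqrt (α * p k)

/-- Feasibility for problem (P1). -/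
def FeasP1 (K : ℕ) (b : Fin K → ℝ) (η Pmax : ℝ)
    (p : Fin K → ℝ) (α : ℝ) : Prop :=
  (∑ k, b k * p k) ≥ η ∧ (∀ k, 0 ≤ p k ∧ p k ≤ Pmax) ∧ 0 < α

private lemma aux_ineq (a c β : ℝ) (ha : 0 < a) (hc : 0 ≤ c) (hβ : 0 < β) :
    -(c ^ 2 / a) ≤ β * a - 2 * (Real.sqrt β * c) := by
  set s := Real.sqrt β with hs
  have ht : s ^ 2 = β := Real.sq_sqrt hβ.le
  rw [← ht, ← neg_div, div_le_iff₀ ha]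
  nlinarith [sq_nonneg (a * s - c)]

private lemma aux_eq (a c : ℝ) (ha : 0 < a) (hc : 0 ≤ c) :
    (c / a) ^ 2 * a - 2 * (Real.sqrt ((c / a) ^ 2) * c) = -(c ^ 2 / a) := by
  rw [Real.sqrt_sq (div_nonneg hc ha.le)]
  field_simp
  ring

theorem stmt_1 (K : ℕ) (hK : 1 ≤ K) (h b : Fin K → ℝ)
    (hh : ∀ k, 0 < h k) (hb : ∀ k, 0 < b k)
    (σ2 η Pmax : ℝ) (hσ : 0 < σ2) (hη : 0 < η) (hP : 0 < Pmax)
    (hfeas : Pmax * ∑ k, b k ≥ η) :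
    ∃ (p : Fin K → ℝ) (α : ℝ), FeasP1 K b η Pmax p α ∧
      ∀ (q : Fin K → ℝ) (β : ℝ), FeasP1 K b η Pmax q β →
        objP1 K h σ2 p α ≤ objP1 K h σ2 q β := by
  classical
  set S : Set (Fin K → ℝ) :=
    {p | η ≤ ∑ k, b k * p k ∧ ∀ k, 0 ≤ p k ∧ p k ≤ Pmax} with hS
  set F : (Fin K → ℝ) → ℝ := fun p =>
    -((∑ k, h k * Real.sqrt (p k)) ^ 2 / (σ2 + ∑ k, (h k) ^ 2 * p k)) with hF
  have hden : ∀ p ∈ S, 0 < σ2 + ∑ k, (h k) ^ 2 * p k := by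
    intro p hp
    have h0 : 0 ≤ ∑ k, (h k) ^ 2 * p k :=
      Finset.sum_nonneg fun k _ => mul_nonneg (sq_nonneg _) (hp.2 k).1
    linarith
  have hScpt : IsCompact S := by
    have h1 : IsCompact (Set.Icc (0 : Fin K → ℝ) (fun _ => Pmax)) := isCompact_Icc
    have h2 : IsClosed {p : Fin K → ℝ | η ≤ ∑ k, b k * p k} :=
      isClosed_le continuous_const (by continuity)
    have hEq : S = Set.Icc (0 : Fin K → ℝ) (fun _ => Pmax) ∩
        {p | η ≤ ∑ k, b k * p k} := by
      ext p
      simp only [hS, Set.mem_setOf_eq, Set.mem_inter_iff, Set.mem_Icc, Pi.le_def,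
        Pi.zero_apply]
      constructor
      · rintro ⟨h1, h2⟩
        exact ⟨⟨fun k => (h2 k).1, fun k => (h2 k).2⟩, h1⟩
      · rintro ⟨⟨h2, h3⟩, h1⟩
        exact ⟨h1, fun k => ⟨h2 k, h3 k⟩⟩
    rw [hEq]
    exact h1.inter_right h2
  have hSne : ((fun _ => Pmax : Fin K → ℝ)) ∈ S := by
    refine ⟨?_, fun k => ⟨hP.le, le_refl _⟩⟩
    have : ∑ k, b k * Pmax = Pmax * ∑ k, b k := by
      rw [← Finset.sum_mul]; ring
    rw [this]; exact hfeas
  have hcont : ContinuousOn F S := by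
    apply ContinuousOn.neg
    apply ContinuousOn.div
    · exact ((continuous_finset_sum _ fun k _ =>
        (continuous_const.mul (Real.continuous_sqrt.comp (continuous_apply k)))).pow
          2).continuousOn
    · exact (continuous_const.add (continuous_finset_sum _ fun k _ =>
        continuous_const.mul (continuous_apply k))).continuousOn
    · intro p hp; exact (hden p hp).ne'
  obtain ⟨p₀, hp₀S, hmin⟩ := hScpt.exists_isMinOn ⟨_, hSne⟩ hcont
  have ha : 0 < σ2 + ∑ k, (h k) ^ 2 * p₀ k := hden p₀ hp₀S
  have hex : ∃ k, 0 < p₀ k := by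
    by_contra hc
    push_neg at hc
    have hz : ∀ k, p₀ k = 0 := fun k => le_antisymm (hc k) (hp₀S.2 k).1
    have : ∑ k, b k * p₀ k = 0 := by simp [hz]
    have := hp₀S.1
    simp_all
    linarith
  have hc0 : 0 < ∑ k, h k * Real.sqrt (p₀ k) := by
    obtain ⟨k, hk⟩ := hex
    refine Finset.sum_pos' (fun i _ => mul_nonneg (hh i).le (Real.sqrt_nonneg _)) ?_
    exact ⟨k, Finset.mem_univ k, mul_pos (hh k) (Real.sqrt_pos.mpr hk)⟩
  set c := ∑ k, h k * Real.sqrt (p₀ k) with hcdef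
  set a := σ2 + ∑ k, (h k) ^ 2 * p₀ k with hadef
  have hαpos : 0 < (c / a) ^ 2 := by positivity
  have sqrt_sum : ∀ (q : Fin K → ℝ) (β : ℝ), 0 ≤ β → (∀ k, 0 ≤ q k) →
      ∑ k, h k * Real.sqrt (β * q k) = Real.sqrt β * ∑ k, h k * Real.sqrt (q k) := by
    intro q β hβ hq
    rw [Finset.mul_sum]
    refine Finset.sum_congr rfl fun k _ => ?_
    rw [Real.sqrt_mul hβ]
    ring
  have heq : objP1 K h σ2 p₀ ((c / a) ^ 2) = -(c ^ 2 / a) := by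
    unfold objP1
    rw [sqrt_sum p₀ _ hαpos.le (fun k => (hp₀S.2 k).1)]
    rw [← hcdef, ← hadef]
    exact aux_eq a c ha hc0.le
  refine ⟨p₀, (c / a) ^ 2, ⟨hp₀S.1, hp₀S.2, hαpos⟩, ?_⟩
  intro q β hqfeas
  obtain ⟨hq1, hq2, hβ⟩ := hqfeas
  have hqS : q ∈ S := ⟨hq1, hq2⟩
  have haq : 0 < σ2 + ∑ k, (h k) ^ 2 * q k := hden q hqS
  have hcq : 0 ≤ ∑ k, h k * Real.sqrt (q k) :=
    Finset.sum_nonneg fun i _ => mul_nonneg (hh i).le (Real.sqrt_nonneg _)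
  calc objP1 K h σ2 p₀ ((c / a) ^ 2) = -(c ^ 2 / a) := heq
    _ = F p₀ := by rw [hF]
    _ ≤ F q := isMinOn_iff.mp hmin q hqS
    _ ≤ objP1 K h σ2 q β := by
        unfold objP1
        rw [sqrt_sum q β hβ.le (fun k => (hq2 k).1), hF]
        exact aux_ineq _ _ β haq hcq hβ
end

section
/- Suppose Pmax·∑_k b_k ≥ η. Consider the relaxed problem obtained from (P1) by replacing the constraint α > 0 with α ≥ 0. Then the minimum of f over this closed feasible set is attained, and every minimizer (p*, α*) satisfies α* ≤ max{ 1/(Pmax·min_k h_k²), K/σ² }. -/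
open Finset

/-- Feasibility for the relaxed problem (P1) where `α > 0` is replaced by `α ≥ 0`. -/
def FeasP1Relaxed (K : ℕ) (b : Fin K → ℝ) (η Pmax : ℝ)
    (p : Fin K → ℝ) (α : ℝ) : Prop :=
  (∑ k, b k * p k) ≥ η ∧ (∀ k, 0 ≤ p k ∧ p k ≤ Pmax) ∧ 0 ≤ α

/-!
For fixed powers `p ≥ 0`, put `A = σ² + ∑ h_k² p_k > 0` and `B = ∑ h_k √p_k ≥ 0`. In the variable
`t = √α` the objective is the quadratic `A t² - 2 B t = A (t - B/A)² - B²/A`, so its unique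
minimizer over `α ≥ 0` is `α = (B/A)²`, and Cauchy–Schwarz (`B² ≤ K ∑ h_k² p_k`) bounds this by
`K/σ²`. Hence every minimizer has `α ≤ K/σ²`, and a minimizer exists because the objective is
continuous and every feasible point is dominated by one in the compact slice `α ≤ K/σ²`.
-/

theorem exists_isMinOn_of_forall_exists_le {X : Type*} [TopologicalSpace X] {f : X → ℝ}
    {s t : Set X} (ht : IsCompact t) (hts : t ⊆ s) (hne : t.Nonempty) (hf : ContinuousOn f t)
    (hdom : ∀ x ∈ s, ∃ y ∈ t, f y ≤ f x) : ∃ x ∈ s, IsMinOn f s x := by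
  obtain ⟨x, hxt, hxmin⟩ := ht.exists_isMinOn hne hf
  refine ⟨x, hts hxt, fun z hz => ?_⟩
  obtain ⟨y, hyt, hyz⟩ := hdom z hz
  exact (hxmin hyt).trans hyz

section OptimalAlpha

variable {K : ℕ} {h : Fin K → ℝ} {σ2 : ℝ} {p : Fin K → ℝ}

theorem sum_sq_mul_nonneg (hp : ∀ k, 0 ≤ p k) : 0 ≤ ∑ k, h k ^ 2 * p k :=
  Finset.sum_nonneg fun k _ => mul_nonneg (sq_nonneg _) (hp k)

noncomputable def optAlpha (K : ℕ) (h : Fin K → ℝ) (σ2 : ℝ) (p : Fin K → ℝ) : ℝ :=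
  ((∑ k, h k * √(p k)) / (σ2 + ∑ k, h k ^ 2 * p k)) ^ 2

theorem objP1_eq_of_nonneg {α : ℝ} (hα : 0 ≤ α) :
    objP1 K h σ2 p α = (σ2 + ∑ k, h k ^ 2 * p k) * α - 2 * (∑ k, h k * √(p k)) * √α := by
  simp only [objP1, Real.sqrt_mul hα, mul_left_comm _ √α, ← Finset.mul_sum]
  ring

theorem objP1_sub_objP1_optAlpha (hσ : 0 < σ2) (hh : ∀ k, 0 ≤ h k) (hp : ∀ k, 0 ≤ p k)
    {α : ℝ} (hα : 0 ≤ α) :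
    objP1 K h σ2 p α - objP1 K h σ2 p (optAlpha K h σ2 p) =
      (σ2 + ∑ k, h k ^ 2 * p k) *
        (√α - (∑ k, h k * √(p k)) / (σ2 + ∑ k, h k ^ 2 * p k)) ^ 2 := by
  have hA : 0 < σ2 + ∑ k, h k ^ 2 * p k := by linarith [sum_sq_mul_nonneg (h := h) hp]
  have hB : 0 ≤ ∑ k, h k * √(p k) :=
    Finset.sum_nonneg fun k _ => mul_nonneg (hh k) (Real.sqrt_nonneg _)
  rw [optAlpha, objP1_eq_of_nonneg hα, objP1_eq_of_nonneg (sq_nonneg _),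
    Real.sqrt_sq (div_nonneg hB hA.le)]
  generalize σ2 + ∑ k, h k ^ 2 * p k = A at hA ⊢
  generalize ∑ k, h k * √(p k) = B
  field_simp
  linear_combination -A ^ 2 * Real.sq_sqrt hα

theorem objP1_optAlpha_le (hσ : 0 < σ2) (hh : ∀ k, 0 ≤ h k) (hp : ∀ k, 0 ≤ p k)
    {α : ℝ} (hα : 0 ≤ α) : objP1 K h σ2 p (optAlpha K h σ2 p) ≤ objP1 K h σ2 p α := by
  have hA : 0 ≤ σ2 + ∑ k, h k ^ 2 * p k := by linarith [sum_sq_mul_nonneg (h := h) hp]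
  linarith [objP1_sub_objP1_optAlpha hσ hh hp hα,
    mul_nonneg hA (sq_nonneg (√α - (∑ k, h k * √(p k)) / (σ2 + ∑ k, h k ^ 2 * p k)))]

theorem eq_optAlpha_of_objP1_le (hσ : 0 < σ2) (hh : ∀ k, 0 ≤ h k) (hp : ∀ k, 0 ≤ p k)
    {α : ℝ} (hα : 0 ≤ α) (hle : objP1 K h σ2 p α ≤ objP1 K h σ2 p (optAlpha K h σ2 p)) :
    α = optAlpha K h σ2 p := by
  have hA : 0 < σ2 + ∑ k, h k ^ 2 * p k := by linarith [sum_sq_mul_nonneg (h := h) hp]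
  have hsq := objP1_sub_objP1_optAlpha hσ hh hp hα
  have hzero : √α - (∑ k, h k * √(p k)) / (σ2 + ∑ k, h k ^ 2 * p k) = 0 := by
    have : (σ2 + ∑ k, h k ^ 2 * p k) *
        (√α - (∑ k, h k * √(p k)) / (σ2 + ∑ k, h k ^ 2 * p k)) ^ 2 = 0 :=
      le_antisymm (by linarith) (by positivity)
    simpa [hA.ne'] using this
  rw [optAlpha, ← sub_eq_zero.mp hzero, Real.sq_sqrt hα]

theorem sq_sum_mul_sqrt_le (hp : ∀ k, 0 ≤ p k) :
    (∑ k, h k * √(p k)) ^ 2 ≤ K * ∑ k, h k ^ 2 * p k := by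
  simpa [mul_pow, Real.sq_sqrt (hp _)] using
    sq_sum_le_card_mul_sum_sq (s := univ) (f := fun k => h k * √(p k))

theorem optAlpha_le (hσ : 0 < σ2) (hp : ∀ k, 0 ≤ p k) : optAlpha K h σ2 p ≤ K / σ2 := by
  have hS := sum_sq_mul_nonneg (h := h) hp
  have hCS := sq_sum_mul_sqrt_le (h := h) hp
  rw [optAlpha, div_pow, div_le_div_iff₀ (by positivity) hσ]
  calc (∑ k, h k * √(p k)) ^ 2 * σ2 ≤ K * (∑ k, h k ^ 2 * p k) * σ2 := by gcongr
    _ ≤ K * (σ2 + ∑ k, h k ^ 2 * p k) ^ 2 := by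
      rw [mul_assoc]
      gcongr
      nlinarith

end OptimalAlpha

theorem continuous_objP1 (K : ℕ) (h : Fin K → ℝ) (σ2 : ℝ) :
    Continuous fun x : (Fin K → ℝ) × ℝ => objP1 K h σ2 x.1 x.2 := by
  unfold objP1
  fun_prop

theorem isClosed_setOf_feasP1Relaxed (K : ℕ) (b : Fin K → ℝ) (η Pmax : ℝ) :
    IsClosed {x : (Fin K → ℝ) × ℝ | FeasP1Relaxed K b η Pmax x.1 x.2} := by
  simp only [FeasP1Relaxed, ge_iff_le, Set.ofPred_and, Set.ofPred_forall]
  refine (isClosed_le (by fun_prop) (by fun_prop)).inter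
    ((isClosed_iInter fun k => ?_).inter (isClosed_le (by fun_prop) (by fun_prop)))
  exact (isClosed_le (by fun_prop) (by fun_prop)).inter (isClosed_le (by fun_prop) (by fun_prop))

theorem isCompact_setOf_feasP1Relaxed_le (K : ℕ) (b : Fin K → ℝ) (η Pmax M : ℝ) :
    IsCompact {x : (Fin K → ℝ) × ℝ | FeasP1Relaxed K b η Pmax x.1 x.2 ∧ x.2 ≤ M} := by
  refine ((isCompact_Icc (a := (0 : Fin K → ℝ)) (b := fun _ => Pmax)).prod
    (isCompact_Icc (a := (0 : ℝ)) (b := M))).of_isClosed_subset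
    ((isClosed_setOf_feasP1Relaxed K b η Pmax).inter (isClosed_le continuous_snd continuous_const))
    ?_
  rintro x ⟨⟨-, hp, hα⟩, hαM⟩
  exact ⟨⟨fun k => (hp k).1, fun k => (hp k).2⟩, hα, hαM⟩

theorem stmt_2_general (K : ℕ) (hK : 0 < K) (h b : Fin K → ℝ)
    (hh : ∀ k, 0 < h k)
    (σ2 η Pmax : ℝ) (hσ : 0 < σ2) (hP : 0 < Pmax)
    (hfeas : Pmax * ∑ k, b k ≥ η) :
    (∃ (p : Fin K → ℝ) (α : ℝ), FeasP1Relaxed K b η Pmax p α ∧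
      ∀ (q : Fin K → ℝ) (β : ℝ), FeasP1Relaxed K b η Pmax q β →
        objP1 K h σ2 p α ≤ objP1 K h σ2 q β) ∧
    (∀ (p : Fin K → ℝ) (α : ℝ), FeasP1Relaxed K b η Pmax p α →
      (∀ (q : Fin K → ℝ) (β : ℝ), FeasP1Relaxed K b η Pmax q β →
        objP1 K h σ2 p α ≤ objP1 K h σ2 q β) →
      α ≤ max (1 / (Pmax * Finset.univ.inf' ⟨⟨0, hK⟩, Finset.mem_univ _⟩
                      (fun k => (h k) ^ 2)))
              ((K : ℝ) / σ2)) := by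
  have hh' : ∀ k, 0 ≤ h k := fun k => (hh k).le
  constructor
  · have hconst : FeasP1Relaxed K b η Pmax (fun _ => Pmax) 0 :=
      ⟨by simpa [mul_comm, Finset.mul_sum] using hfeas, fun _ => ⟨hP.le, le_rfl⟩, le_rfl⟩
    obtain ⟨x, hx, hxmin⟩ := exists_isMinOn_of_forall_exists_le
      (isCompact_setOf_feasP1Relaxed_le K b η Pmax (K / σ2)) (fun _ hx => hx.1)
      ⟨((fun _ => Pmax), 0), hconst, by positivity⟩ (continuous_objP1 K h σ2).continuousOn
      (fun x ⟨hq, hp, hα⟩ => ⟨(x.1, optAlpha K h σ2 x.1),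
        ⟨⟨hq, hp, sq_nonneg _⟩, optAlpha_le hσ fun k => (hp k).1⟩,
        objP1_optAlpha_le hσ hh' (fun k => (hp k).1) hα⟩)
    exact ⟨x.1, x.2, hx, fun q β hqβ => hxmin (a := (q, β)) hqβ⟩
  · rintro p α ⟨hsum, hp, hα⟩ hmin
    have hp0 : ∀ k, 0 ≤ p k := fun k => (hp k).1
    have hαopt : α = optAlpha K h σ2 p :=
      eq_optAlpha_of_objP1_le hσ hh' hp0 hα (hmin p _ ⟨hsum, hp, sq_nonneg _⟩)
    exact hαopt ▸ (optAlpha_le hσ hp0).trans (le_max_right _ _)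

theorem stmt_2 (K : ℕ) (hK : 0 < K) (h b : Fin K → ℝ)
    (hh : ∀ k, 0 < h k) (hb : ∀ k, 0 < b k)
    (σ2 η Pmax : ℝ) (hσ : 0 < σ2) (hη : 0 < η) (hP : 0 < Pmax)
    (hfeas : Pmax * ∑ k, b k ≥ η) :
    (∃ (p : Fin K → ℝ) (α : ℝ), FeasP1Relaxed K b η Pmax p α ∧
      ∀ (q : Fin K → ℝ) (β : ℝ), FeasP1Relaxed K b η Pmax q β →
        objP1 K h σ2 p α ≤ objP1 K h σ2 q β) ∧
    (∀ (p : Fin K → ℝ) (α : ℝ), FeasP1Relaxed K b η Pmax p α →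
      (∀ (q : Fin K → ℝ) (β : ℝ), FeasP1Relaxed K b η Pmax q β →
        objP1 K h σ2 p α ≤ objP1 K h σ2 q β) →
      α ≤ max (1 / (Pmax * Finset.univ.inf' ⟨⟨0, hK⟩, Finset.mem_univ _⟩
                      (fun k => (h k) ^ 2)))
              ((K : ℝ) / σ2)) :=
  stmt_2_general K hK h b hh σ2 η Pmax hσ hP hfeas
end

section
/- Suppose Pmax·∑_k b_k ≥ η. Then there exists a point (p, α) feasible for (P1) (so in particular α > 0) with f(p, α) < 0. Consequently, in the relaxed problem where the constraint α > 0 is replaced by α ≥ 0, no feasible point with α = 0 is a minimizer, since the objective value at any such point equals 0. -/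
open Finset

theorem stmt_3 (K : ℕ) (hK : 1 ≤ K) (h b : Fin K → ℝ)
    (hh : ∀ k, 0 < h k) (hb : ∀ k, 0 < b k)
    (σ2 η Pmax : ℝ) (hσ : 0 < σ2) (hη : 0 < η) (hP : 0 < Pmax)
    (hfeas : Pmax * ∑ k, b k ≥ η) :
    (∃ (p : Fin K → ℝ) (α : ℝ), FeasP1 K b η Pmax p α ∧ objP1 K h σ2 p α < 0) ∧
    (∀ p : Fin K → ℝ, FeasP1Relaxed K b η Pmax p 0 →
      objP1 K h σ2 p 0 = 0 ∧
      ¬ (∀ (q : Fin K → ℝ) (β : ℝ), FeasP1Relaxed K b η Pmax q β →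
          objP1 K h σ2 p 0 ≤ objP1 K h σ2 q β)) := by
  have hKne : Nonempty (Fin K) := ⟨⟨0, hK⟩⟩
  set B : ℝ := ∑ k, h k * Real.sqrt Pmax with hB
  set A : ℝ := σ2 + ∑ k : Fin K, (h k) ^ 2 * Pmax with hA
  have hBpos : 0 < B := by
    apply Finset.sum_pos
    · intro k _
      exact mul_pos (hh k) (Real.sqrt_pos.mpr hP)
    · exact Finset.univ_nonempty
  have hApos : 0 < A := by
    apply add_pos hσ
    apply Finset.sum_pos
    · intro k _
      exact mul_pos (pow_pos (hh k) 2) hP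
    · exact Finset.univ_nonempty
  have hBA : 0 < B / A := div_pos hBpos hApos
  have hex : ∃ (p : Fin K → ℝ) (α : ℝ), FeasP1 K b η Pmax p α ∧ objP1 K h σ2 p α < 0 := by
    refine ⟨fun _ => Pmax, (B / A) ^ 2, ⟨?_, fun k => ⟨hP.le, le_refl _⟩, pow_pos hBA 2⟩, ?_⟩
    · have := hfeas
      rw [Finset.mul_sum] at this
      simpa [mul_comm] using this
    · have hsq : ∀ k : Fin K, Real.sqrt ((B / A) ^ 2 * Pmax) = (B / A) * Real.sqrt Pmax := by
        intro k
        rw [Real.sqrt_mul (by positivity), Real.sqrt_sq hBA.le]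
      unfold objP1
      have : (∑ k, h k * Real.sqrt ((B / A) ^ 2 * Pmax)) = (B / A) * B := by
        rw [hB, Finset.mul_sum]
        apply Finset.sum_congr rfl
        intro k _
        rw [hsq k]; ring
      rw [this, ← hA]
      have : (B / A) ^ 2 * A - 2 * (B / A * B) = -(B ^ 2 / A) := by
        field_simp; ring
      rw [this]
      exact neg_lt_zero.mpr (div_pos (pow_pos hBpos 2) hApos)
  refine ⟨hex, fun p hp => ?_⟩
  have hzero : objP1 K h σ2 p 0 = 0 := by
    unfold objP1
    simp [Real.sqrt_zero]
  refine ⟨hzero, fun hmin => ?_⟩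
  obtain ⟨q, β, ⟨hq1, hq2, hq3⟩, hqf⟩ := hex
  have := hmin q β ⟨hq1, hq2, hq3.le⟩
  rw [hzero] at this
  linarith
end

section
/- (a) For all distinct k, j ∈ Fin K with h_k²/b_k ≠ h_j²/b_j and all α > 0: ι_k(α) = ι_j(α) if and only if √(α·Pmax) = (h_k/b_k − h_j/b_j)/(h_k²/b_k − h_j²/b_j). (b) If h_k²/b_k = h_j²/b_j then the difference ι_k(α) − ι_j(α) has the same sign (positive, negative, or identically zero) for all α > 0. (c) The set {α > 0 : there exist distinct k, j with h_k²/b_k ≠ h_j²/b_j and ι_k(α) = ι_j(α)} has at most K·(K−1)/2 elements. -/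
open Finset

/-- The threshold function `ι_k(α)`. -/
noncomputable def iota (K : ℕ) (h b : Fin K → ℝ) (Pmax : ℝ)
    (k : Fin K) (α : ℝ) : ℝ :=
  (h k) ^ 2 / b k * (1 - 1 / (h k * Real.sqrt (α * Pmax)))

theorem stmt_14 (K : ℕ) (hK : 1 ≤ K) (h b : Fin K → ℝ)
    (hh : ∀ k, 0 < h k) (hb : ∀ k, 0 < b k)
    (Pmax : ℝ) (hP : 0 < Pmax) :
    -- (a) characterization of crossing points
    (∀ k j : Fin K, k ≠ j → (h k) ^ 2 / b k ≠ (h j) ^ 2 / b j →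
      ∀ α : ℝ, 0 < α →
        (iota K h b Pmax k α = iota K h b Pmax j α ↔
          Real.sqrt (α * Pmax) =
            (h k / b k - h j / b j) / ((h k) ^ 2 / b k - (h j) ^ 2 / b j))) ∧
    -- (b) constant relative order when the leading coefficients agree
    (∀ k j : Fin K, (h k) ^ 2 / b k = (h j) ^ 2 / b j →
      ((∀ α : ℝ, 0 < α → 0 < iota K h b Pmax k α - iota K h b Pmax j α) ∨
       (∀ α : ℝ, 0 < α → iota K h b Pmax k α - iota K h b Pmax j α < 0) ∨
       (∀ α : ℝ, 0 < α → iota K h b Pmax k α - iota K h b Pmax j α = 0))) ∧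
    -- (c) at most K(K-1)/2 transition points
    ({α : ℝ | 0 < α ∧ ∃ k j : Fin K, k ≠ j ∧
        (h k) ^ 2 / b k ≠ (h j) ^ 2 / b j ∧
        iota K h b Pmax k α = iota K h b Pmax j α}.Finite ∧
     {α : ℝ | 0 < α ∧ ∃ k j : Fin K, k ≠ j ∧
        (h k) ^ 2 / b k ≠ (h j) ^ 2 / b j ∧
        iota K h b Pmax k α = iota K h b Pmax j α}.ncard ≤ K * (K - 1) / 2) := by
  -- rewrite iota in a convenient form
  have hs : ∀ α : ℝ, 0 < α → 0 < Real.sqrt (α * Pmax) := fun α hα =>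
    Real.sqrt_pos.mpr (mul_pos hα hP)
  have e : ∀ (k : Fin K) (α : ℝ), 0 < α →
      iota K h b Pmax k α = (h k) ^ 2 / b k - (h k / b k) / Real.sqrt (α * Pmax) := by
    intro k α hα
    unfold iota
    field_simp [ne_of_gt (hh k), ne_of_gt (hb k), ne_of_gt (hs α hα)]
  have parta : ∀ k j : Fin K, k ≠ j → (h k) ^ 2 / b k ≠ (h j) ^ 2 / b j →
      ∀ α : ℝ, 0 < α →
        (iota K h b Pmax k α = iota K h b Pmax j α ↔
          Real.sqrt (α * Pmax) =
            (h k / b k - h j / b j) / ((h k) ^ 2 / b k - (h j) ^ 2 / b j)) := by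
    intro k j _ hA α hα
    have hD : (h k) ^ 2 / b k - (h j) ^ 2 / b j ≠ 0 := sub_ne_zero.mpr hA
    have hs' := ne_of_gt (hs α hα)
    set s := Real.sqrt (α * Pmax) with hsdef
    rw [e k α hα, e j α hα, eq_div_iff hD]
    constructor
    · intro hEq
      have h2 : (h j / b j - h k / b k) / s = h j ^ 2 / b j - h k ^ 2 / b k := by
        rw [sub_div]; linarith
      rw [div_eq_iff hs'] at h2
      linear_combination h2
    · intro hEq
      have h2 : (h k / b k - h j / b j) / s = h k ^ 2 / b k - h j ^ 2 / b j := by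
        rw [← hEq]; exact mul_div_cancel_left₀ _ hs'
      have h3 := sub_div (h k / b k) (h j / b j) s
      linarith
  refine ⟨parta, ?_, ?_⟩
  · intro k j hA
    rcases lt_trichotomy (h k / b k) (h j / b j) with hc | hc | hc
    · left
      intro α hα
      rw [e k α hα, e j α hα, hA]
      have : 0 < (h j / b j - h k / b k) / Real.sqrt (α * Pmax) :=
        div_pos (by linarith) (hs α hα)
      have hx : (h j) ^ 2 / b j - h k / b k / Real.sqrt (α * Pmax) -
          ((h j) ^ 2 / b j - h j / b j / Real.sqrt (α * Pmax)) =
          (h j / b j - h k / b k) / Real.sqrt (α * Pmax) := by ring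
      rw [hx]; exact this
    · right; right
      intro α hα
      rw [e k α hα, e j α hα, hA, hc]
      ring
    · right; left
      intro α hα
      rw [e k α hα, e j α hα, hA]
      have : 0 < (h k / b k - h j / b j) / Real.sqrt (α * Pmax) :=
        div_pos (by linarith) (hs α hα)
      have hx : (h j) ^ 2 / b j - h k / b k / Real.sqrt (α * Pmax) -
          ((h j) ^ 2 / b j - h j / b j / Real.sqrt (α * Pmax)) =
          -((h k / b k - h j / b j) / Real.sqrt (α * Pmax)) := by ring
      rw [hx]; linarith
  · -- part (c)
    set f : Fin K → Fin K → ℝ := fun k j =>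
      ((h k / b k - h j / b j) / ((h k) ^ 2 / b k - (h j) ^ 2 / b j)) ^ 2 / Pmax with hf
    have hsymm : ∀ k j, f k j = f j k := by
      intro k j
      simp only [hf]
      rw [show h k / b k - h j / b j = -(h j / b j - h k / b k) by ring,
        show (h k) ^ 2 / b k - (h j) ^ 2 / b j = -((h j) ^ 2 / b j - (h k) ^ 2 / b k) by ring,
        neg_div_neg_eq]
    set g : Sym2 (Fin K) → ℝ := Sym2.lift ⟨f, hsymm⟩ with hg
    set g₂ : { z : Sym2 (Fin K) // ¬z.IsDiag } → ℝ := fun z => g z.1 with hg2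
    have hsub : {α : ℝ | 0 < α ∧ ∃ k j : Fin K, k ≠ j ∧
        (h k) ^ 2 / b k ≠ (h j) ^ 2 / b j ∧
        iota K h b Pmax k α = iota K h b Pmax j α} ⊆ Set.range g₂ := by
      rintro α ⟨hα, k, j, hkj, hA, hEq⟩
      refine ⟨⟨s(k, j), by simpa using hkj⟩, ?_⟩
      have hroot := (parta k j hkj hA α hα).mp hEq
      have : α * Pmax = Real.sqrt (α * Pmax) ^ 2 :=
        (Real.sq_sqrt (le_of_lt (mul_pos hα hP))).symm
      simp only [hg2, hg, Sym2.lift_mk, hf]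
      rw [← hroot, Real.sq_sqrt (le_of_lt (mul_pos hα hP))]
      field_simp
    have hfin : (Set.range g₂).Finite := Set.finite_range g₂
    refine ⟨hfin.subset hsub, le_trans (Set.ncard_le_ncard hsub hfin) ?_⟩
    have h1 : (Set.range g₂).ncard ≤ Fintype.card { z : Sym2 (Fin K) // ¬z.IsDiag } := by
      rw [← Set.image_univ]
      calc (g₂ '' Set.univ).ncard ≤ (Set.univ : Set { z : Sym2 (Fin K) // ¬z.IsDiag }).ncard :=
            Set.ncard_image_le Set.finite_univ
        _ = Fintype.card _ := by rw [Set.ncard_univ, Nat.card_eq_fintype_card]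
    calc (Set.range g₂).ncard ≤ Fintype.card { z : Sym2 (Fin K) // ¬z.IsDiag } := h1
      _ = (Fintype.card (Fin K)).choose 2 := Sym2.card_subtype_not_diag
      _ = K * (K - 1) / 2 := by rw [Fintype.card_fin, Nat.choose_two_right]
end

section
/- Let α > 0 and let π be a permutation of Fin K such that ι_{π(1)}(α) ≤ ι_{π(2)}(α) ≤ … ≤ ι_{π(K)}(α). For any i ∈ {1, …, K−1} and any λ with ι_{π(i)}(α) ≤ λ < ι_{π(i+1)}(α), the active set {k ∈ Fin K : x_k(λ, α) = α·Pmax} equals {π(1), …, π(i)}. -/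
open Finset

/-- The candidate power allocation `x_k(λ, α)`. -/
noncomputable def xOpt (K : ℕ) (h b : Fin K → ℝ) (Pmax : ℝ)
    (k : Fin K) (lam α : ℝ) : ℝ :=
  if lam < iota K h b Pmax k α then (h k) ^ 2 / ((h k) ^ 2 - lam * b k) ^ 2
  else α * Pmax

lemma branch_lt (K : ℕ) (h b : Fin K → ℝ) (hh : ∀ k, 0 < h k) (hb : ∀ k, 0 < b k)
    (Pmax : ℝ) (hP : 0 < Pmax) (α : ℝ) (hα : 0 < α) (k : Fin K) (lam : ℝ)
    (hlt : lam < iota K h b Pmax k α) :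
    (h k) ^ 2 / ((h k) ^ 2 - lam * b k) ^ 2 < α * Pmax := by
  have hsp : 0 < Real.sqrt (α * Pmax) := Real.sqrt_pos.mpr (by positivity)
  have hs2 : Real.sqrt (α * Pmax) ^ 2 = α * Pmax := Real.sq_sqrt (by positivity)
  rw [iota] at hlt
  revert hsp hs2 hlt
  generalize Real.sqrt (α * Pmax) = s
  intro hlt hsp hs2
  have hhk := hh k
  have hbk := hb k
  have hkey : h k / s < (h k) ^ 2 - lam * b k := by
    have h2 : (h k) ^ 2 / b k * (1 - 1 / (h k * s)) = ((h k) ^ 2 - h k / s) / b k := by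
      field_simp
    rw [h2, lt_div_iff₀ hbk] at hlt
    have hslt : lam * b k < (h k) ^ 2 - h k / s := hlt
    linarith
  have hpos : 0 < h k / s := by positivity
  have hsq : (h k / s) ^ 2 < ((h k) ^ 2 - lam * b k) ^ 2 := by nlinarith
  calc (h k) ^ 2 / ((h k) ^ 2 - lam * b k) ^ 2
      < (h k) ^ 2 / (h k / s) ^ 2 := by
        apply div_lt_div_of_pos_left (by positivity) (by positivity) hsq
    _ = s ^ 2 := by field_simp
    _ = α * Pmax := hs2

theorem stmt_15 (K : ℕ) (hK : 1 ≤ K) (h b : Fin K → ℝ)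
    (hh : ∀ k, 0 < h k) (hb : ∀ k, 0 < b k)
    (Pmax : ℝ) (hP : 0 < Pmax)
    (α : ℝ) (hα : 0 < α)
    (π : Equiv.Perm (Fin K))
    (hsort : ∀ i j : Fin K, i ≤ j →
      iota K h b Pmax (π i) α ≤ iota K h b Pmax (π j) α)
    (i : Fin K) (hi : (i : ℕ) + 1 < K)
    (lam : ℝ)
    (hlow : iota K h b Pmax (π i) α ≤ lam)
    (hhigh : lam < iota K h b Pmax (π ⟨(i : ℕ) + 1, hi⟩) α) :
    ∀ k : Fin K, xOpt K h b Pmax k lam α = α * Pmax ↔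
      ∃ j : Fin K, j ≤ i ∧ π j = k := by
  intro k
  constructor
  · intro hx
    by_contra hcon
    push_neg at hcon
    have hj : ¬ (π.symm k ≤ i) := fun hle => hcon _ hle (π.apply_symm_apply k)
    have hle : (⟨(i : ℕ) + 1, hi⟩ : Fin K) ≤ π.symm k := by
      simp only [Fin.le_def] at hj ⊢
      omega
    have hlt : lam < iota K h b Pmax k α := by
      refine lt_of_lt_of_le hhigh ?_
      have := hsort _ _ hle
      simpa using this
    rw [xOpt, if_pos hlt] at hx
    exact absurd hx (ne_of_lt (branch_lt K h b hh hb Pmax hP α hα k lam hlt))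
  · rintro ⟨j, hji, rfl⟩
    have hle : iota K h b Pmax (π j) α ≤ lam :=
      le_trans (hsort j i hji) hlow
    rw [xOpt, if_neg (not_lt.mpr hle)]
end

section
/- Fix a nonempty subset S ⊆ Fin K with D_S > 0, define q_S(λ) = (σ² + λ·D_S)/Pmax + ∑_{k∈S} h_k², α_S(λ) = (1/Pmax)·( (∑_{k∈S} h_k)/q_S(λ) )², and for j ∈ Fin K let g_j(λ) = ι_j(α_S(λ)) and C_j = h_j·D_S/(b_j·Pmax·∑_{k∈S} h_k). Suppose λ̄ satisfies q_S(λ̄) > 0 and λ̄ = g_j(λ̄). Then for every ε ≥ 0, (λ̄ + ε) − g_j(λ̄ + ε) = (1 + C_j)·ε ≥ 0, with equality if and only if ε = 0. -/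
open Finset

theorem stmt_18 (K : ℕ) (hK : 1 ≤ K) (h b : Fin K → ℝ)
    (hh : ∀ k, 0 < h k) (hb : ∀ k, 0 < b k)
    (σ2 η Pmax : ℝ) (hσ : 0 < σ2) (hη : 0 < η) (hP : 0 < Pmax)
    (S : Finset (Fin K)) (hSne : S.Nonempty)
    (hDS : 0 < η - Pmax * ∑ k ∈ S, b k) :
    let DS : ℝ := η - Pmax * ∑ k ∈ S, b k
    let q : ℝ → ℝ := fun lam => (σ2 + lam * DS) / Pmax + ∑ k ∈ S, (h k) ^ 2
    let αS : ℝ → ℝ := fun lam => (1 / Pmax) * ((∑ k ∈ S, h k) / q lam) ^ 2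
    ∀ (j : Fin K) (lambar : ℝ), 0 < q lambar →
      lambar = iota K h b Pmax j (αS lambar) →
      ∀ ε : ℝ, 0 ≤ ε →
        (lambar + ε) - iota K h b Pmax j (αS (lambar + ε)) =
          (1 + h j * DS / (b j * Pmax * ∑ k ∈ S, h k)) * ε ∧
        0 ≤ (lambar + ε) - iota K h b Pmax j (αS (lambar + ε)) ∧
        ((lambar + ε) - iota K h b Pmax j (αS (lambar + ε)) = 0 ↔ ε = 0) := by
  intro DS q αS j lambar hq hfix ε hε
  have hSh : 0 < ∑ k ∈ S, h k := Finset.sum_pos (fun k _ => hh k) hSne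
  have hhj := hh j
  have hbj := hb j
  have hDS' : 0 < DS := hDS
  have key : ∀ lam : ℝ, 0 < q lam →
      iota K h b Pmax j (αS lam)
        = h j ^ 2 / b j * (1 - q lam / (h j * ∑ k ∈ S, h k)) := by
    intro lam hql
    have hα : αS lam * Pmax = ((∑ k ∈ S, h k) / q lam) ^ 2 := by
      simp only [αS]
      field_simp
    unfold iota
    rw [hα, Real.sqrt_sq (by positivity)]
    rw [show 1 / (h j * ((∑ k ∈ S, h k) / q lam)) = q lam / (h j * ∑ k ∈ S, h k) by
      field_simp]
  have hq2 : q (lambar + ε) = q lambar + ε * DS / Pmax := by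
    simp only [q]; ring
  have hq2pos : 0 < q (lambar + ε) := by
    rw [hq2]; positivity
  have hmain : (lambar + ε) - iota K h b Pmax j (αS (lambar + ε)) =
      (1 + h j * DS / (b j * Pmax * ∑ k ∈ S, h k)) * ε := by
    rw [key _ hq2pos, hq2]
    have hfix' := hfix
    rw [key _ hq] at hfix'
    rw [show (lambar : ℝ) + ε = (h j ^ 2 / b j * (1 - q lambar / (h j * ∑ k ∈ S, h k))) + ε
      from by rw [← hfix']]
    field_simp
    ring
  have hC : 0 < 1 + h j * DS / (b j * Pmax * ∑ k ∈ S, h k) := by positivity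
  refine ⟨hmain, ?_, ?_⟩
  · rw [hmain]; positivity
  · rw [hmain]
    constructor
    · intro h0
      rcases mul_eq_zero.mp h0 with h1 | h1
      · exact absurd h1 (ne_of_gt hC)
      · exact h1
    · intro h0; rw [h0, mul_zero]
end
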